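/- Let X be a smooth affine curve over a field K of characteristic 0 whose coordinate ring contains an element Γ. Suppose ∇ = d/dΓ + b/r is a connection on A^m with A = K[Γ, 1/r], r squarefree, such that the local exponents at every root of r are all 0 (nilpotent residue matrices) and no local exponent at infinity is an integer ≥ 0. Then ker(∇ : A^m → A^m dΓ) = 0. -/

import Mathlib

open Polynomial

/-- The derivative with respect to `Γ` of a rational function. -/
noncomputable def ratDeriv {K : Type*} [Field K] (x : RatFunc K) : RatFunc K :=
  algebraMap (Polynomial K) (RatFunc K)
      (derivative x.num * x.denom - x.num * derivative x.denom) /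
    algebraMap (Polynomial K) (RatFunc K) (x.denom ^ 2)

/-- Membership in `A = K[Γ, 1/r]`, viewed inside the field of rational functions. -/
def inA {K : Type*} [Field K] (r : Polynomial K) (x : RatFunc K) : Prop :=
  ∃ (f : Polynomial K) (n : ℕ),
    x = algebraMap (Polynomial K) (RatFunc K) f / (algebraMap (Polynomial K) (RatFunc K) r) ^ n

/-- The connection `∇ = d/dΓ + b/r` acting on column vectors of rational functions. -/
noncomputable def nabla {K : Type*} [Field K] (m : ℕ) (r : Polynomial K)
    (b : Matrix (Fin m) (Fin m) (Polynomial K)) (v : Fin m → RatFunc K) : Fin m → RatFunc K :=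
  fun i => ratDeriv (v i) +
    ((Matrix.of fun i j => algebraMap (Polynomial K) (RatFunc K) (b i j) /
        algebraMap (Polynomial K) (RatFunc K) r).mulVec v) i

/-!
Write a horizontal section as `v = f / r ^ n` with `f` polynomial; then `∇ v = 0` reads
`f' r + b f = n r' f`. If `n > 0`, evaluating at a root `γ` of `r` shows that `f(γ)` is an
eigenvector of the nilpotent residue `b(γ) / r'(γ)` for the eigenvalue `n`, so `f(γ) = 0`. As `r`
is squarefree this gives `r ∣ f`, and `n` drops by one. If `n = 0`, let `N` be the largest degree
of an entry of `f`: the coefficient of `Γ ^ (N + d - 1)` gives `(N + b_{d-1}) f_N = 0`, so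
`f_N = 0` since `-N` is not a local exponent at infinity.
-/

open Matrix

section

variable {K : Type*} [Field K]

local notation "φ" => algebraMap (Polynomial K) (RatFunc K)

lemma ratDeriv_algebraMap_div (p q : K[X]) (hq : q ≠ 0) :
    ratDeriv (φ p / φ q) = φ (derivative p * q - p * derivative q) / φ (q ^ 2) := by
  set x : RatFunc K := φ p / φ q
  have hden : x.denom ≠ 0 := x.denom_ne_zero
  have hcross : x.num * q = p * x.denom := by
    apply RatFunc.algebraMap_injective K
    rw [map_mul, map_mul, ← div_eq_div_iff (RatFunc.algebraMap_ne_zero hden)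
      (RatFunc.algebraMap_ne_zero hq), RatFunc.num_div_denom]
  have hcross' := congrArg derivative hcross
  rw [derivative_mul, derivative_mul] at hcross'
  rw [ratDeriv, div_eq_div_iff (RatFunc.algebraMap_ne_zero (pow_ne_zero 2 hden))
    (RatFunc.algebraMap_ne_zero (pow_ne_zero 2 hq)), ← map_mul, ← map_mul]
  congr 1
  linear_combination (x.denom * q) * hcross' -
    (derivative x.denom * q + derivative q * x.denom) * hcross

lemma derivative_pow_mul_self (r : K[X]) (n : ℕ) :
    derivative (r ^ n) * r = n * r ^ n * derivative r := by
  cases n with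
  | zero => simp
  | succ n => rw [derivative_pow, Nat.add_sub_cancel, pow_succ, C_eq_natCast]; ring

lemma coeff_derivative_mul_of_natDegree_le {p q : K[X]} {N d : ℕ} (hp : p.natDegree ≤ N)
    (hq : q.natDegree ≤ d) :
    (derivative p * q).coeff (N + d - 1) = N * p.coeff N * q.coeff d := by
  rcases Nat.eq_zero_or_pos N with rfl | hN
  · rw [eq_C_of_natDegree_eq_zero (Nat.le_zero.mp hp)]
    simp
  obtain ⟨M, rfl⟩ := Nat.exists_eq_add_of_lt hN
  have hp' : (derivative p).natDegree ≤ M := by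
    have := natDegree_derivative_le p
    omega
  rw [show 0 + M + 1 + d - 1 = M + d by omega, coeff_mul_add_eq_of_natDegree_le hp' hq,
    coeff_derivative]
  push_cast
  ring_nf

lemma Matrix.eq_zero_of_isNilpotent_of_mulVec_eq_smul {ι L : Type*} [Fintype ι] [DecidableEq ι]
    [Field L] {M : Matrix ι ι L} (hM : IsNilpotent M) {t : L} (ht : t ≠ 0) {w : ι → L}
    (hw : M *ᵥ w = t • w) : w = 0 := by
  by_contra hw0
  have heig : Module.End.HasEigenvalue (Matrix.toLin' M) t :=
    Module.End.hasEigenvalue_of_hasEigenvector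
      ⟨Module.End.mem_eigenspace_iff.mpr (by rwa [Matrix.toLin'_apply]), hw0⟩
  exact ht (heig.isNilpotent_of_isNilpotent (hM.map Matrix.toLinAlgEquiv')).eq_zero

lemma Polynomial.Separable.dvd_of_forall_aeval_eq_zero {L : Type*} [Field L] [IsAlgClosed L]
    [Algebra K L] {r f : K[X]} (hr : r.Separable)
    (h : ∀ γ : L, aeval γ r = 0 → aeval γ f = 0) :
    r ∣ f := by
  rcases eq_or_ne f 0 with rfl | hf
  · exact dvd_zero r
  rw [← map_dvd_map' (algebraMap K L)]
  refine (IsAlgClosed.splits _).dvd_of_roots_le_roots (map_ne_zero hr.ne_zero)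
    ((Multiset.le_iff_subset (nodup_roots hr.map)).mpr fun γ hγ => ?_)
  rw [mem_roots (map_ne_zero hf), IsRoot, eval_map_algebraMap]
  rw [mem_roots (map_ne_zero hr.ne_zero), IsRoot, eval_map_algebraMap] at hγ
  exact h γ hγ

lemma exists_eq_div_pow_of_forall_inA {ι : Type*} [Fintype ι] {r : K[X]} (hr : r ≠ 0)
    {v : ι → RatFunc K} (hv : ∀ i, inA r (v i)) :
    ∃ (n : ℕ) (f : ι → K[X]), v = fun i => φ (f i) / φ r ^ n := by
  choose g k hgk using hv
  refine ⟨Finset.univ.sup k, fun i => g i * r ^ (Finset.univ.sup k - k i), funext fun i => ?_⟩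
  have hk : k i ≤ Finset.univ.sup k := Finset.le_sup (Finset.mem_univ i)
  have hrφ : φ r ≠ 0 := RatFunc.algebraMap_ne_zero hr
  rw [hgk i, map_mul, map_pow, div_eq_div_iff (pow_ne_zero _ hrφ) (pow_ne_zero _ hrφ), mul_assoc,
    ← pow_add, Nat.sub_add_cancel hk]

/-- `∇ (f / r ^ n) = 0`, with the denominator `r ^ (n + 1)` cleared. -/
def IsHorizontalNumerator {ι : Type*} [Fintype ι] (r : K[X]) (b : Matrix ι ι K[X]) (n : ℕ)
    (f : ι → K[X]) : Prop :=
  ∀ i, derivative (f i) * r + (b *ᵥ f) i = n * f i * derivative r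

lemma nabla_div_pow_apply {m : ℕ} {r : K[X]} (hr : r ≠ 0) (b : Matrix (Fin m) (Fin m) K[X])
    (n : ℕ) (f : Fin m → K[X]) (i : Fin m) :
    nabla m r b (fun j => φ (f j) / φ r ^ n) i =
      φ (derivative (f i) * r + (b *ᵥ f) i - n * f i * derivative r) / φ r ^ (n + 1) := by
  have hmul : (Matrix.of fun i j => φ (b i j) / φ r) *ᵥ (fun j => φ (f j) / φ r ^ n) =
      fun i => φ ((b *ᵥ f) i) / φ r ^ (n + 1) := by
    ext i
    simp only [Matrix.mulVec, dotProduct, Matrix.of_apply, div_mul_div_comm, ← Finset.sum_div,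
      ← map_mul, ← map_sum, pow_succ', mul_comm (φ r)]
  have hφ : ∀ {p : K[X]}, p ≠ 0 → φ p ≠ 0 := RatFunc.algebraMap_ne_zero
  have hrn := pow_ne_zero n hr
  rw [nabla, hmul, ← map_pow, ratDeriv_algebraMap_div _ _ hrn, ← map_pow,
    div_add_div _ _ (hφ (pow_ne_zero 2 hrn)) (hφ (pow_ne_zero _ hr)),
    div_eq_div_iff (mul_ne_zero (hφ (pow_ne_zero 2 hrn)) (hφ (pow_ne_zero _ hr)))
      (hφ (pow_ne_zero _ hr))]
  simp only [← map_mul, ← map_add]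
  congr 1
  linear_combination (-(f i) * r ^ n * r ^ (n + 1)) * derivative_pow_mul_self r n

lemma isHorizontalNumerator_of_nabla_eq_zero {m : ℕ} {r : K[X]} (hr : r ≠ 0)
    {b : Matrix (Fin m) (Fin m) K[X]} {n : ℕ} {f : Fin m → K[X]}
    (h : nabla m r b (fun j => φ (f j) / φ r ^ n) = 0) : IsHorizontalNumerator r b n f := by
  intro i
  have hi := congrFun h i
  rw [nabla_div_pow_apply hr, Pi.zero_apply,
    div_eq_zero_iff, or_iff_left (pow_ne_zero _ (RatFunc.algebraMap_ne_zero hr)),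
    map_eq_zero_iff _ (RatFunc.algebraMap_injective K), sub_eq_zero] at hi
  exact hi

namespace IsHorizontalNumerator

variable {ι : Type*} [Fintype ι] {r : K[X]} {b : Matrix ι ι K[X]} {n : ℕ} {f : ι → K[X]}

lemma aeval_eq_zero [DecidableEq ι] [CharZero K] {L : Type*} [Field L] [Algebra K L]
    (hf : IsHorizontalNumerator r b n f) (hn : n ≠ 0) {γ : L} (hγ : aeval γ r = 0)
    (hρ : aeval γ (derivative r) ≠ 0)
    (hres : IsNilpotent ((aeval γ (derivative r))⁻¹ • b.map (fun q => aeval γ q))) :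
    (fun j => aeval γ (f j)) = 0 := by
  have hB : b.map (fun q => aeval γ q) *ᵥ (fun j => aeval γ (f j)) =
      (n * aeval γ (derivative r)) • fun j => aeval γ (f j) := by
    ext i
    have hi := congrArg (aeval γ) (hf i)
    rw [map_add, map_mul, hγ, mul_zero, zero_add, ← AlgHom.coe_toRingHom, RingHom.map_mulVec]
      at hi
    simp only [AlgHom.coe_toRingHom, map_mul, map_natCast] at hi
    rw [Pi.smul_apply, smul_eq_mul, mul_right_comm, ← hi]
    rfl
  have hnL : (n : L) ≠ 0 := by
    rw [← map_natCast (algebraMap K L)]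
    exact (_root_.map_ne_zero _).mpr (Nat.cast_ne_zero.mpr hn)
  refine Matrix.eq_zero_of_isNilpotent_of_mulVec_eq_smul hres hnL ?_
  rw [Matrix.smul_mulVec, hB, smul_smul, mul_comm, mul_assoc, mul_inv_cancel₀ hρ, mul_one]

lemma of_mul (hr : r ≠ 0) {g : ι → K[X]} (h : IsHorizontalNumerator r b (n + 1) (r • g)) :
    IsHorizontalNumerator r b n g := by
  intro i
  have hi := h i
  rw [Matrix.mulVec_smul, Pi.smul_apply, Pi.smul_apply, smul_eq_mul, smul_eq_mul,
    derivative_mul] at hi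
  apply mul_left_cancel₀ hr
  push_cast at hi
  linear_combination hi

lemma mulVec_coeff_eq_zero [DecidableEq ι] (hf : IsHorizontalNumerator r b 0 f) {d : ℕ}
    (hd : 1 ≤ d) (hmonic : r.Monic) (hdeg : r.natDegree = d)
    (hb : ∀ i j, (b i j).natDegree ≤ d - 1)
    {N : ℕ} (hN : ∀ i, (f i).natDegree ≤ N) :
    ((N : K) • 1 + b.map (fun q => q.coeff (d - 1))) *ᵥ (fun i => (f i).coeff N) = 0 := by
  ext i
  have hi := congrArg (fun p => p.coeff (N + d - 1)) (hf i)
  simp only [Nat.cast_zero, zero_mul, coeff_zero, coeff_add, Matrix.mulVec, dotProduct,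
    finsetSum_coeff] at hi
  rw [coeff_derivative_mul_of_natDegree_le (hN i) hdeg.le, ← hdeg, hmonic.coeff_natDegree,
    hdeg, show N + d - 1 = d - 1 + N by omega] at hi
  simp only [coeff_mul_add_eq_of_natDegree_le (hb i _) (hN _)] at hi
  rw [Matrix.add_mulVec, Matrix.smul_mulVec, Matrix.one_mulVec]
  simpa [Matrix.mulVec, dotProduct] using hi

lemma eq_zero_of_det_ne_zero [DecidableEq ι] (hf : IsHorizontalNumerator r b 0 f) {d : ℕ}
    (hd : 1 ≤ d) (hmonic : r.Monic) (hdeg : r.natDegree = d)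
    (hb : ∀ i j, (b i j).natDegree ≤ d - 1)
    (hdet : ∀ N : ℕ, ((N : K) • 1 + b.map (fun q => q.coeff (d - 1))).det ≠ 0) : f = 0 := by
  by_contra hf0
  obtain ⟨i₀, hi₀⟩ : ∃ i, f i ≠ 0 := by simpa [funext_iff] using hf0
  obtain ⟨i₁, -, hmax⟩ := Finset.exists_max_image Finset.univ (fun i => (f i).degree)
    ⟨i₀, Finset.mem_univ _⟩
  have hi₁ : f i₁ ≠ 0 := fun h => hi₀ (degree_eq_bot.mp
    (le_bot_iff.mp (by simpa [h] using hmax i₀ (Finset.mem_univ _))))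
  have hc := Matrix.eq_zero_of_mulVec_eq_zero (hdet _)
    (hf.mulVec_coeff_eq_zero hd hmonic hdeg hb
      fun i => natDegree_le_natDegree (hmax i (Finset.mem_univ i)))
  exact leadingCoeff_ne_zero.mpr hi₁ (congrFun hc i₁)

lemma eq_zero [CharZero K] [DecidableEq ι] {L : Type*} [Field L] [IsAlgClosed L] [Algebra K L]
    {d : ℕ} (hd : 1 ≤ d) (hmonic : r.Monic) (hsep : r.Separable) (hdeg : r.natDegree = d)
    (hb : ∀ i j, (b i j).natDegree ≤ d - 1)
    (hres : ∀ γ : L, aeval γ r = 0 →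
      IsNilpotent ((aeval γ (derivative r))⁻¹ • b.map (fun q => aeval γ q)))
    (hdet : ∀ N : ℕ, ((N : K) • 1 + b.map (fun q => q.coeff (d - 1))).det ≠ 0)
    (hf : IsHorizontalNumerator r b n f) : f = 0 := by
  induction n generalizing f with
  | zero => exact hf.eq_zero_of_det_ne_zero hd hmonic hdeg hb hdet
  | succ n ih =>
    have hdvd : ∀ j, r ∣ f j := fun j => hsep.dvd_of_forall_aeval_eq_zero fun γ hγ =>
      congrFun (hf.aeval_eq_zero n.succ_ne_zero hγ (hsep.aeval_derivative_ne_zero hγ)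
        (hres γ hγ)) j
    choose g hg using hdvd
    obtain rfl : f = r • g := funext hg
    rw [ih (hf.of_mul hmonic.ne_zero), smul_zero]

end IsHorizontalNumerator

end

/-- let `∇ = d/dΓ + b/r` be a connection on `A^m`, `A = K[Γ,1/r]`, `K` of
characteristic 0, `r` monic squarefree of degree `d`, `deg b ≤ d-1`. If the residue matrix
`b(γ)/r'(γ)` at every root `γ` of `r` is nilpotent (all local exponents 0), and no local
exponent at infinity (eigenvalue of `-b_{d-1}`) is an integer `≥ 0`, then
`ker(∇ : A^m → A^m dΓ) = 0`. -/
theorem stmt11 {K : Type*} [Field K] [CharZero K] (m d : ℕ) (hd : 1 ≤ d)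
    (r : Polynomial K) (hmonic : r.Monic) (hsf : Squarefree r) (hdeg : r.natDegree = d)
    (b : Matrix (Fin m) (Fin m) (Polynomial K)) (hb : ∀ i j, (b i j).degree ≤ (d - 1 : ℕ))
    (hnilp : ∀ γ : AlgebraicClosure K, aeval γ r = 0 →
      IsNilpotent ((aeval γ (derivative r))⁻¹ • b.map (fun q => aeval γ q)))
    (hinf : ∀ n : ℕ,
      ((n : AlgebraicClosure K) • (1 : Matrix (Fin m) (Fin m) (AlgebraicClosure K))
        + b.map (fun q => algebraMap K (AlgebraicClosure K) (q.coeff (d - 1)))).det ≠ 0) :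
    ∀ v : Fin m → RatFunc K, (∀ i, inA r (v i)) → nabla m r b v = 0 → v = 0 := by
  intro v hv hnabla
  obtain ⟨n, f, rfl⟩ := exists_eq_div_pow_of_forall_inA hmonic.ne_zero hv
  have hdet : ∀ N : ℕ, ((N : K) • 1 + b.map (fun q => q.coeff (d - 1))).det ≠ 0 := by
    intro N h
    have hmap : ((N : K) • 1 + b.map (fun q => q.coeff (d - 1))).map
        (algebraMap K (AlgebraicClosure K)) = (N : AlgebraicClosure K) • 1 +
          b.map (fun q => algebraMap K (AlgebraicClosure K) (q.coeff (d - 1))) := by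
      ext i j
      by_cases hij : i = j <;> simp [hij]
    apply hinf N
    rw [← hmap, ← RingHom.mapMatrix_apply, ← RingHom.map_det, h, map_zero]
  have hf := (isHorizontalNumerator_of_nabla_eq_zero hmonic.ne_zero hnabla).eq_zero hd hmonic
    (PerfectField.separable_iff_squarefree.mpr hsf) hdeg
    (fun i j => natDegree_le_iff_degree_le.mpr (hb i j)) hnilp hdet
  ext i
  simp [hf]
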